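/- arXiv:2209.12338 — 3 statements merged into one kernel-verified Lean document; each statement's English description precedes it below -/
import Mathlib

section
/- Let X be a metric space, ε > 0, N ≥ 1 a natural number, and (x_i)_{i ∈ ι} a family of points of X such that the family of open balls (B(x_i, 2ε))_{i ∈ ι} has multiplicity at most N. Then there exists a coloring c : ι → Fin N with finitely many colors such that whenever i ≠ j and B(x_i, ε) ∩ B(x_j, ε) ≠ ∅, the colors satisfy c(i) ≠ c(j); that is, no two intersecting balls of the family (B(x_i, ε))_{i ∈ ι} have the same color. -/
/-!
If `B(x i, ε)` meets `B(x j, ε)` then `dist (x i) (x j) < 2ε`, so `x i` lies in `B(x j, 2ε)`;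
since it also lies in `B(x i, 2ε)`, the multiplicity bound leaves `i` fewer than `N` neighbours
in the intersection graph of the `ε`-balls. A graph of degree `< N` is greedily `N`-colourable on
every finite vertex set, and the de Bruijn–Erdős compactness theorem extends this to the whole
(possibly infinite) graph.
-/

open Metric

theorem exists_fin_notMem_image_of_encard_lt {α : Type*} {N : ℕ} (c : α → Fin N) {T : Set α}
    (hT : T.encard < N) : ∃ k : Fin N, k ∉ c '' T := by
  by_contra! h
  have hle := Set.encard_image_le c T
  rw [Set.eq_univ_of_forall h, Set.encard_univ, ENat.card_eq_coe_natCard, Nat.card_eq_fintype_card,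
    Fintype.card_fin] at hle
  exact hle.not_gt hT

namespace SimpleGraph

variable {V : Type*} {G : SimpleGraph V} {N : ℕ}

theorem exists_coloring_on_finset (hdeg : ∀ v, (G.neighborSet v).encard < N) (s : Finset V) :
    ∃ c : V → Fin N, ∀ u ∈ s, ∀ v ∈ s, G.Adj u v → c u ≠ c v := by
  classical
  induction s using Finset.induction_on with
  | empty =>
    -- a colouring is still a total function, so `Fin N` must be inhabited unless `V` is empty
    have hN : ∀ v : V, 0 < N := fun v => by exact_mod_cast pos_of_gt (hdeg v)
    exact ⟨fun v => ⟨0, hN v⟩, by simp⟩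
  | insert a s ha ih =>
    obtain ⟨c, hc⟩ := ih
    obtain ⟨k, hk⟩ := exists_fin_notMem_image_of_encard_lt c
      ((Set.encard_le_encard Set.inter_subset_left).trans_lt (hdeg a) :
        (G.neighborSet a ∩ s).encard < N)
    have hfresh : ∀ v ∈ s, G.Adj a v → c v ≠ k := fun v hv hav hvk => hk ⟨v, ⟨hav, hv⟩, hvk⟩
    refine ⟨Function.update c a k, ?_⟩
    simp only [Finset.mem_insert]
    rintro u (rfl | hu) v (rfl | hv) huv
    · exact absurd huv (G.loopless.irrefl _)
    · rw [Function.update_self, Function.update_of_ne (ne_of_mem_of_not_mem hv ha)]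
      exact (hfresh v hv huv).symm
    · rw [Function.update_self, Function.update_of_ne (ne_of_mem_of_not_mem hu ha)]
      exact hfresh u hu huv.symm
    · rw [Function.update_of_ne (ne_of_mem_of_not_mem hu ha),
        Function.update_of_ne (ne_of_mem_of_not_mem hv ha)]
      exact hc u hu v hv huv

theorem colorable_of_forall_encard_neighborSet_lt (hdeg : ∀ v, (G.neighborSet v).encard < N) :
    G.Colorable N :=
  nonempty_hom_of_forall_finite_subgraph_hom fun G' hfin =>
    have hc := exists_coloring_on_finset hdeg hfin.toFinset
    ⟨fun v => hc.choose v, fun {u v} huv =>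
      hc.choose_spec u (by simp) v (by simp) (G'.adj_sub huv)⟩

end SimpleGraph

section BallIntersectionGraph

variable {X ι : Type*} [PseudoMetricSpace X]

def ballIntersectionGraph (x : ι → X) (r : ℝ) : SimpleGraph ι where
  Adj i j := i ≠ j ∧ (ball (x i) r ∩ ball (x j) r).Nonempty
  symm := ⟨fun i _ h => ⟨h.1.symm, Set.inter_comm (ball (x i) r) _ ▸ h.2⟩⟩
  loopless := ⟨fun _ h => h.1 rfl⟩

theorem ballIntersectionGraph_adj {x : ι → X} {r : ℝ} {i j : ι} :
    (ballIntersectionGraph x r).Adj i j ↔ i ≠ j ∧ (ball (x i) r ∩ ball (x j) r).Nonempty :=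
  Iff.rfl

theorem ballIntersectionGraph_neighborSet_subset (x : ι → X) (r : ℝ) (i : ι) :
    (ballIntersectionGraph x r).neighborSet i ⊆ {j | x i ∈ ball (x j) (2 * r)} \ {i} := by
  rintro j hj
  obtain ⟨hij, y, hyi, hyj⟩ := ballIntersectionGraph_adj.mp hj
  refine ⟨?_, hij.symm⟩
  calc dist (x i) (x j) ≤ dist y (x i) + dist y (x j) := dist_triangle_left _ _ _
    _ < 2 * r := by rw [mem_ball] at hyi hyj; linarith

theorem encard_neighborSet_ballIntersectionGraph_lt {x : ι → X} {r : ℝ} (hr : 0 < r) {N : ℕ}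
    (hmult : ∀ y : X, {i : ι | y ∈ ball (x i) (2 * r)}.encard ≤ N) (i : ι) :
    ((ballIntersectionGraph x r).neighborSet i).encard < N := by
  have hfin : {j | x i ∈ ball (x j) (2 * r)}.Finite := Set.finite_of_encard_le_coe (hmult (x i))
  have hi : i ∈ {j | x i ∈ ball (x j) (2 * r)} := mem_ball_self (by positivity)
  calc ((ballIntersectionGraph x r).neighborSet i).encard
      ≤ ({j | x i ∈ ball (x j) (2 * r)} \ {i}).encard :=
        Set.encard_le_encard (ballIntersectionGraph_neighborSet_subset x r i)
    _ < {j | x i ∈ ball (x j) (2 * r)}.encard :=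
        hfin.sdiff.encard_lt_encard (Set.sdiff_singleton_ssubset.mpr hi)
    _ ≤ N := hmult (x i)

end BallIntersectionGraph

theorem ball_coloring_of_multiplicity_general {X : Type*} [MetricSpace X] {ι : Type*}
    (ε : ℝ) (hε : 0 < ε) (N : ℕ) (x : ι → X)
    (hmult : ∀ y : X, {i : ι | y ∈ Metric.ball (x i) (2 * ε)}.encard ≤ (N : ℕ∞)) :
    ∃ c : ι → Fin N, ∀ i j : ι, i ≠ j →
      (Metric.ball (x i) ε ∩ Metric.ball (x j) ε).Nonempty → c i ≠ c j := by
  obtain ⟨c⟩ := SimpleGraph.colorable_of_forall_encard_neighborSet_lt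
    (encard_neighborSet_ballIntersectionGraph_lt hε hmult)
  exact ⟨c, fun i j hij hmeet => c.valid (ballIntersectionGraph_adj.mpr ⟨hij, hmeet⟩)⟩

/-- If the family of doubled balls `B(x i, 2ε)` has multiplicity at most `N`,
then there is a coloring of the index set with `N` colors such that no two
distinct intersecting `ε`-balls of the family receive the same color. -/
theorem ball_coloring_of_multiplicity {X : Type*} [MetricSpace X] {ι : Type*}
    (ε : ℝ) (hε : 0 < ε) (N : ℕ) (hN : 1 ≤ N) (x : ι → X)
    (hmult : ∀ y : X, {i : ι | y ∈ Metric.ball (x i) (2 * ε)}.encard ≤ (N : ℕ∞)) :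
    ∃ c : ι → Fin N, ∀ i j : ι, i ≠ j →
      (Metric.ball (x i) ε ∩ Metric.ball (x j) ε).Nonempty → c i ≠ c j :=
  ball_coloring_of_multiplicity_general ε hε N x hmult
end

section
/- Let X be a set, N ≥ 1 a natural number, and (U_i)_{i ∈ ι} a family of subsets of X such that for every index i the set {j ∈ ι : j ≠ i and U_i ∩ U_j ≠ ∅} has at most N − 1 elements. Then there exists a coloring c : ι → Fin N such that whenever i ≠ j and U_i ∩ U_j ≠ ∅, the colors satisfy c(i) ≠ c(j). Consequently the family partitions into N subfamilies U_1, ..., U_N, each subfamily consisting of pairwise disjoint sets. -/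
lemma greedy_coloring_finset {X : Type*} {ι : Type*}
    (N : ℕ) (hN : 1 ≤ N) (U : ι → Set X)
    (hdeg : ∀ i : ι, {j : ι | j ≠ i ∧ (U i ∩ U j).Nonempty}.encard ≤ ((N - 1 : ℕ) : ℕ∞))
    (s : Finset ι) :
    ∃ c : ι → Fin N, ∀ i ∈ s, ∀ j ∈ s, i ≠ j → (U i ∩ U j).Nonempty → c i ≠ c j := by
  classical
  induction s using Finset.induction_on with
  | empty =>
      exact ⟨fun _ => ⟨0, hN⟩, by simp⟩
  | @insert i s his ih =>
      obtain ⟨c, hc⟩ := ih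
      set T : Finset ι := s.filter (fun j => j ≠ i ∧ (U i ∩ U j).Nonempty) with hT
      have hTsub : (T : Set ι) ⊆ {j : ι | j ≠ i ∧ (U i ∩ U j).Nonempty} := by
        intro j hj
        simp only [hT, Finset.coe_filter, Set.mem_setOf_eq] at hj
        exact hj.2
      have hTcard : (T.card : ℕ∞) ≤ ((N - 1 : ℕ) : ℕ∞) := by
        rw [← Set.encard_coe_eq_coe_finsetCard]
        exact le_trans (Set.encard_mono hTsub) (hdeg i)
      have hTcard' : T.card ≤ N - 1 := by exact_mod_cast hTcard
      have himg : (T.image c).card < N := by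
        calc (T.image c).card ≤ T.card := Finset.card_image_le
          _ ≤ N - 1 := hTcard'
          _ < N := Nat.sub_lt (lt_of_lt_of_le Nat.zero_lt_one hN) Nat.zero_lt_one
      have hne : T.image c ≠ Finset.univ := by
        intro h
        rw [h, Finset.card_univ, Fintype.card_fin] at himg
        exact lt_irrefl _ himg
      obtain ⟨k, hk⟩ : ∃ k, k ∉ T.image c := by
        by_contra h
        push_neg at h
        exact hne (Finset.eq_univ_iff_forall.mpr h)
      refine ⟨Function.update c i k, ?_⟩
      intro a ha b hb hab hint
      rcases Finset.mem_insert.mp ha with rfl | ha'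
      · rcases Finset.mem_insert.mp hb with rfl | hb'
        · exact absurd rfl hab
        · have hbT : b ∈ T := Finset.mem_filter.mpr ⟨hb', hab.symm, hint⟩
          rw [Function.update_self, Function.update_of_ne hab.symm]
          intro h
          exact hk (Finset.mem_image.mpr ⟨b, hbT, h.symm⟩)
      · rcases Finset.mem_insert.mp hb with rfl | hb'
        · have haT : a ∈ T := Finset.mem_filter.mpr ⟨ha', hab,
            by rwa [Set.inter_comm] at hint⟩
          rw [Function.update_self, Function.update_of_ne hab]
          intro h
          exact hk (Finset.mem_image.mpr ⟨a, haT, h⟩)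
        · have hai : a ≠ i := fun h => his (h ▸ ha')
          have hbi : b ≠ i := fun h => his (h ▸ hb')
          rw [Function.update_of_ne hai, Function.update_of_ne hbi]
          exact hc a ha' b hb' hab hint

/-- Coloring lemma: if each member of a family of sets intersects at most
`N - 1` other members, then the family can be colored with `N` colors so that
no two distinct intersecting members have the same color; consequently the
family is partitioned into `N` subfamilies of pairwise disjoint sets. -/
theorem coloring_of_bounded_intersection_degree {X : Type*} {ι : Type*}
    (N : ℕ) (hN : 1 ≤ N) (U : ι → Set X)
    (hdeg : ∀ i : ι, {j : ι | j ≠ i ∧ (U i ∩ U j).Nonempty}.encard ≤ ((N - 1 : ℕ) : ℕ∞)) :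
    ∃ c : ι → Fin N,
      (∀ i j : ι, i ≠ j → (U i ∩ U j).Nonempty → c i ≠ c j) ∧
      (∀ k : Fin N, ∀ i j : ι, c i = k → c j = k → i ≠ j → Disjoint (U i) (U j)) := by
  classical
  -- constraint pairs
  set P : Type _ := {p : ι × ι // p.1 ≠ p.2 ∧ (U p.1 ∩ U p.2).Nonempty} with hP
  set Z : P → Set (ι → Fin N) := fun p => {c | c p.1.1 ≠ c p.1.2} with hZ
  have hZclosed : ∀ p, IsClosed (Z p) := by
    intro p
    have : Z p = (fun c : ι → Fin N => (c p.1.1, c p.1.2)) ⁻¹'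
        {q : Fin N × Fin N | q.1 ≠ q.2} := rfl
    rw [this]
    exact IsClosed.preimage (by continuity) (by
      haveI : DiscreteTopology (Fin N × Fin N) := inferInstance
      exact isClosed_discrete _)
  have hmain : (⋂ p, Z p).Nonempty := by
    by_contra h
    rw [Set.not_nonempty_iff_eq_empty] at h
    have h' : (Set.univ ∩ ⋂ p, Z p) = ∅ := by rw [h, Set.inter_empty]
    obtain ⟨t, ht⟩ := isCompact_univ.elim_finite_subfamily_closed Z hZclosed h'
    -- build a finset of indices
    set s : Finset ι := t.image (fun p => p.1.1) ∪ t.image (fun p => p.1.2) with hs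
    obtain ⟨c, hc⟩ := greedy_coloring_finset N hN U hdeg s
    have : c ∈ Set.univ ∩ ⋂ p ∈ t, Z p := by
      refine ⟨Set.mem_univ _, Set.mem_iInter₂.mpr fun p hp => ?_⟩
      have h1 : p.1.1 ∈ s := Finset.mem_union_left _ (Finset.mem_image_of_mem _ hp)
      have h2 : p.1.2 ∈ s := Finset.mem_union_right _ (Finset.mem_image_of_mem _ hp)
      exact hc _ h1 _ h2 p.2.1 p.2.2
    rw [ht] at this
    exact this
  obtain ⟨c, hc⟩ := hmain
  refine ⟨c, fun i j hij hint => ?_, fun k i j hi hj hij => ?_⟩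
  · exact Set.mem_iInter.mp hc ⟨(i, j), hij, hint⟩
  · rw [Set.disjoint_iff_inter_eq_empty, ← Set.not_nonempty_iff_eq_empty]
    intro hne
    exact Set.mem_iInter.mp hc ⟨(i, j), hij, hne⟩ (hi.trans hj.symm)
end

section
/- Let X be a paracompact Hausdorff topological space and let π : E → X be a topological real vector bundle of rank n over X. Then there exist a separable real Hilbert space H and a continuous map φ : E → H such that for every x ∈ X the restriction of φ to the fiber E_x = π⁻¹(x) is an injective linear map from E_x into H. -/
/-!
Milnor's trick makes a trivializing cover of a paracompact base countable: for a partition of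
unity `(f i)`, the open sets on which the `f i` with `i ∈ S` are positive and strictly dominate all
others are pairwise disjoint as `S` ranges over the sets of a fixed cardinality `k + 1`, and each
lies in a trivializing set. With a partition of unity `(μ k)` subordinate to the resulting countable
cover, the trivializations scaled by `μ k` glue to a continuous fiberwise linear map into `ℝⁿ` that
is injective on the fibers where `μ k ≠ 0`. These maps are the coordinates of `φ` in `ℓ²(ℕ, ℝⁿ)`;
near each point only finitely many of them are nonzero, so `φ` is continuous.
-/

open TopologicalSpace Set Filter Function Bundle
open scoped Topology ENNReal

namespace PartitionOfUnity

variable {ι X : Type*} [TopologicalSpace X] {s : Set X} (f : PartitionOfUnity ι X s)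

def dominantSet (S : Finset ι) : Set X :=
  {x | ∀ i ∈ S, 0 < f i x ∧ ∀ j ∉ S, f j x < f i x}

theorem isOpen_dominantSet (S : Finset ι) : IsOpen (f.dominantSet S) := by
  refine isOpen_iff_mem_nhds.2 fun x hx => ?_
  obtain ⟨t, ht, htf⟩ := f.locallyFinite x
  set O := interior t ∩ ⋂ i ∈ S, ({y | 0 < f i y} ∩ ⋂ j ∈ htf.toFinset, {y | j ∉ S → f j y < f i y})
  have hO : IsOpen O := by
    refine isOpen_interior.inter <| isOpen_biInter_finset fun i _ =>
      (isOpen_lt continuous_const (f i).continuous).inter <| isOpen_biInter_finset fun j _ => ?_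
    by_cases hj : j ∈ S
    · simp [hj]
    · simpa [hj] using isOpen_lt (f j).continuous (f i).continuous
  have hxO : x ∈ O :=
    ⟨mem_interior_iff_mem_nhds.2 ht, mem_iInter₂.2 fun i hi =>
      ⟨(hx i hi).1, mem_iInter₂.2 fun j _ => (hx i hi).2 j⟩⟩
  refine mem_of_superset (hO.mem_nhds hxO) fun y ⟨hyt, hy⟩ i hi => ?_
  obtain ⟨hpos, hlt⟩ := mem_iInter₂.1 hy i hi
  refine ⟨hpos, fun j hj => ?_⟩
  by_cases hjt : j ∈ htf.toFinset
  · exact mem_iInter₂.1 hlt j hjt hj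
  · have hfj : f j y = 0 := not_ne_iff.1 fun hne =>
      hjt (htf.mem_toFinset.2 ⟨y, hne, interior_subset hyt⟩)
    rwa [hfj]

theorem eq_of_mem_dominantSet {S S' : Finset ι} (hcard : S.card = S'.card) {x : X}
    (hS : x ∈ f.dominantSet S) (hS' : x ∈ f.dominantSet S') : S = S' := by
  by_contra hne
  obtain ⟨i, hiS, hiS'⟩ := Finset.not_subset.1 fun h =>
    hne (Finset.eq_of_subset_of_card_le h hcard.ge)
  obtain ⟨j, hjS', hjS⟩ := Finset.not_subset.1 fun h =>
    hne (Finset.eq_of_subset_of_card_le h hcard.le).symm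
  exact ((hS i hiS).2 j hjS).asymm ((hS' j hjS').2 i hiS')

theorem mem_dominantSet_finsupport (x : X) : x ∈ f.dominantSet (f.finsupport x) := by
  intro i hi
  simp only [mem_finsupport, mem_support, ne_eq, not_not] at hi ⊢
  have hpos : 0 < f i x := (f.nonneg i x).lt_of_ne' hi
  exact ⟨hpos, fun j hj => hj ▸ hpos⟩

end PartitionOfUnity

theorem exists_countable_disjoint_refinement {ι X : Type*} [TopologicalSpace X] [NormalSpace X]
    [ParacompactSpace X] {U : ι → Set X} (hU : ∀ i, IsOpen (U i)) (hcov : ⋃ i, U i = univ) :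
    ∃ W : ℕ → ι → Set X, (∀ k i, IsOpen (W k i)) ∧ (∀ k i, W k i ⊆ U i) ∧
      (∀ k, Pairwise (Disjoint on W k)) ∧ ⋃ k, ⋃ i, W k i = univ := by
  obtain ⟨f, hf⟩ := PartitionOfUnity.exists_isSubordinate isClosed_univ U hU hcov.ge
  refine ⟨fun k i => ⋃ (S : Finset ι) (hS : S.Nonempty) (_ : S.card = k + 1 ∧ hS.choose = i),
    f.dominantSet S, fun k i => ?_, fun k i => ?_, fun k i j hij => ?_, ?_⟩
  · exact isOpen_iUnion fun S => isOpen_iUnion fun _ => isOpen_iUnion fun _ =>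
      f.isOpen_dominantSet S
  · simp only [iUnion_subset_iff]
    rintro S hS ⟨-, rfl⟩ x hx
    exact hf _ (subset_closure (hx _ hS.choose_spec).1.ne')
  · simp only [onFun, disjoint_left, mem_iUnion]
    rintro x ⟨S, hS, ⟨hSk, rfl⟩, hxS⟩ ⟨S', hS', ⟨hS'k, rfl⟩, hxS'⟩
    obtain rfl := f.eq_of_mem_dominantSet (hSk.trans hS'k.symm) hxS hxS'
    exact hij rfl
  · refine eq_univ_of_forall fun x => ?_
    obtain ⟨i, hi⟩ := f.exists_pos (mem_univ x)
    have hS : (f.finsupport x).Nonempty := ⟨i, (f.mem_finsupport x).2 hi.ne'⟩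
    simp only [mem_iUnion]
    exact ⟨_, _, _, hS, ⟨(Nat.succ_pred_eq_of_pos hS.card_pos).symm, rfl⟩,
      f.mem_dominantSet_finsupport x⟩

section FiberwiseLinear

variable {𝕜 B F : Type*} {E : B → Type*} [NontriviallyNormedField 𝕜] [NormedAddCommGroup F]
  [NormedSpace 𝕜 F] [TopologicalSpace B] [∀ x, AddCommMonoid (E x)] [∀ x, Module 𝕜 (E x)]
  [∀ x, TopologicalSpace (E x)] [TopologicalSpace (TotalSpace F E)] [FiberBundle F E]
  [VectorBundle 𝕜 F E]

variable (𝕜) in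
theorem VectorBundle.exists_continuous_fiberwise_linear {W : B → Set B}
    (hWo : ∀ i, IsOpen (W i)) (hWU : ∀ i, W i ⊆ (trivializationAt F E i).baseSet)
    (hWd : Pairwise (Disjoint on W)) {ρ : B → 𝕜} (hρ : Continuous ρ)
    (hρW : tsupport ρ ⊆ ⋃ i, W i) :
    ∃ g : TotalSpace F E → F, Continuous g ∧ support g ⊆ TotalSpace.proj ⁻¹' support ρ ∧
      ∀ x, IsLinearMap 𝕜 (fun v : E x => g ⟨x, v⟩) ∧
        (ρ x ≠ 0 → Injective (fun v : E x => g ⟨x, v⟩)) := by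
  classical
  let chart : B → B := fun x => if h : ∃ i, x ∈ W i then h.choose else x
  have chart_eq {x i} (hx : x ∈ W i) : chart x = i := by
    have h : ∃ i, x ∈ W i := ⟨i, hx⟩
    simp only [chart, dif_pos h]
    exact hWd.eq (not_disjoint_iff.2 ⟨x, h.choose_spec, hx⟩)
  have mem_chart (x : B) : x ∈ (trivializationAt F E (chart x)).baseSet := by
    by_cases h : ∃ i, x ∈ W i
    · obtain ⟨i, hi⟩ := h
      exact chart_eq hi ▸ hWU i hi
    · simpa only [chart, dif_neg h] using mem_baseSet_trivializationAt F E x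
  refine ⟨fun e => ρ e.proj • (trivializationAt F E (chart e.proj) e).2, ?_, ?_, fun x => ?_⟩
  · refine continuous_iff_continuousAt.2 fun e => ?_
    have hproj := FiberBundle.continuous_proj F E
    by_cases he : e.proj ∈ ⋃ i, W i
    · obtain ⟨i, hi⟩ := mem_iUnion.1 he
      have hWi : TotalSpace.proj ⁻¹' W i ∈ 𝓝 e := ((hWo i).preimage hproj).mem_nhds hi
      have hcont : ContinuousOn (fun e' => ρ e'.proj • (trivializationAt F E i e').2)
          (TotalSpace.proj ⁻¹' W i) :=
        (hρ.comp hproj).continuousOn.smul <| continuous_snd.comp_continuousOn <|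
          (trivializationAt F E i).continuousOn.mono fun e' he' =>
            (trivializationAt F E i).mem_source.2 (hWU i he')
      refine (hcont.continuousAt hWi).congr ?_
      filter_upwards [hWi] with e' he'
      rw [chart_eq he']
    · have hnot : e.proj ∉ tsupport ρ := fun h => he (hρW h)
      refine (continuousAt_const (y := 0)).congr ?_
      filter_upwards [((isClosed_tsupport ρ).isOpen_compl.preimage hproj).mem_nhds hnot] with e' he'
      rw [image_eq_zero_of_notMem_tsupport he', zero_smul]
  · intro e he
    exact left_ne_zero_of_smul he
  · have hfib : (fun v : E x => ρ x • (trivializationAt F E (chart x) ⟨x, v⟩).2) =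
        ⇑(ρ x • ((trivializationAt F E (chart x)).linearEquivAt 𝕜 x (mem_chart x) : E x →ₗ[𝕜] F)) :=
      rfl
    refine ⟨hfib ▸ LinearMap.isLinear _, fun hx => hfib ▸ ?_⟩
    exact (smul_right_injective F hx).comp (LinearEquiv.injective _)

end FiberwiseLinear

namespace lp

variable {α : Type*} {G : α → Type*} [∀ i, NormedAddCommGroup (G i)] {p : ℝ≥0∞} [Fact (1 ≤ p)]

theorem exists_continuous_of_locallyFinite {Y : Type*} [TopologicalSpace Y] {g : ∀ i, Y → G i}
    (hg : ∀ i, Continuous (g i)) (hfin : LocallyFinite fun i => support (g i)) :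
    ∃ φ : Y → lp G p, Continuous φ ∧ ∀ y i, φ y i = g i y := by
  classical
  have hsupp (i : α) : support (fun y => lp.single p i (g i y)) ⊆ support (g i) :=
    fun y hy h0 => hy (by simp [h0])
  refine ⟨fun y => ∑ᶠ i, lp.single p i (g i y),
    continuous_finsum (fun i => (isometry_single i).continuous.comp (hg i)) (hfin.subset hsupp),
    fun y i => ?_⟩
  have hfin_y : (support fun j => lp.single p j (g j y)).Finite :=
    (hfin.point_finite y).subset fun j hj => hsupp j hj
  calc (∑ᶠ j, lp.single p j (g j y) : lp G p) i = ∑ᶠ j, lp.single p j (g j y) i :=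
        ((Pi.evalAddMonoidHom G i).comp (coeFnAddMonoidHom G p)).map_finsum hfin_y
    _ = lp.single p i (g i y) i := finsum_eq_single _ i fun j hj => lp.single_apply_ne p j _ hj.symm
    _ = g i y := lp.single_apply_self p i _

theorem separableSpace_of_ne_top [Countable α] [∀ i, SeparableSpace (G i)] (hp : p ≠ ⊤) :
    SeparableSpace (lp G p) := by
  classical
  let A := ⋃ s : Finset α, range fun g : ∀ i, G i => ∑ i ∈ s, lp.single p i (g i)
  have hA : IsSeparable A := isSeparable_iUnion.2 fun s => isSeparable_range <|
    continuous_finsetSum s fun i _ => (isometry_single i).continuous.comp (continuous_apply i)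
  refine isSeparable_univ_iff.1 (hA.closure.mono fun f _ => ?_)
  exact mem_closure_of_tendsto (lp.hasSum_single hp f)
    (Eventually.of_forall fun s => mem_iUnion.2 ⟨s, mem_range_self _⟩)

end lp

/-- For a topological real vector bundle of rank `n` over a paracompact
Hausdorff base `B`, there exist a separable real Hilbert space `H` and a
continuous map `φ` from the total space of the bundle to `H` whose restriction
to each fiber is an injective linear map into `H`. -/
theorem exists_fiberwise_injective_map_to_hilbert
    {B : Type*} [TopologicalSpace B] [ParacompactSpace B] [T2Space B]
    (n : ℕ) (E : B → Type*)
    [∀ x, AddCommGroup (E x)] [∀ x, Module ℝ (E x)] [∀ x, TopologicalSpace (E x)]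
    [TopologicalSpace (Bundle.TotalSpace (Fin n → ℝ) E)]
    [FiberBundle (Fin n → ℝ) E] [VectorBundle ℝ (Fin n → ℝ) E] :
    ∃ (H : Type) (instN : NormedAddCommGroup H),
      letI := instN
      ∃ instI : InnerProductSpace ℝ H,
        letI := instI
        CompleteSpace H ∧ TopologicalSpace.SeparableSpace H ∧
        ∃ φ : Bundle.TotalSpace (Fin n → ℝ) E → H,
          Continuous φ ∧
          ∀ x : B,
            IsLinearMap ℝ (fun v : E x => φ (Bundle.TotalSpace.mk x v)) ∧
            Function.Injective (fun v : E x => φ (Bundle.TotalSpace.mk x v)) := by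
  obtain ⟨W, hWo, hWU, hWd, hWcov⟩ := exists_countable_disjoint_refinement
    (fun x => (trivializationAt (Fin n → ℝ) E x).open_baseSet)
    (iUnion_eq_univ_iff.2 fun x => ⟨x, mem_baseSet_trivializationAt (Fin n → ℝ) E x⟩)
  obtain ⟨μ, hμ⟩ := PartitionOfUnity.exists_isSubordinate isClosed_univ (fun k => ⋃ i, W k i)
    (fun k => isOpen_iUnion (hWo k)) hWcov.ge
  choose g hg_cont hg_supp hg_fib using fun k =>
    VectorBundle.exists_continuous_fiberwise_linear ℝ (hWo k) (hWU k) (hWd k) (μ k).continuous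
      (hμ k)
  let e₂ := (EuclideanSpace.equiv (Fin n) ℝ).symm
  obtain ⟨φ, hφ_cont, hφ⟩ := lp.exists_continuous_of_locallyFinite (p := 2)
    (g := fun k e => e₂ (g k e)) (fun k => e₂.continuous.comp (hg_cont k))
    ((μ.locallyFinite.preimage_continuous (FiberBundle.continuous_proj _ E)).subset fun k =>
      (support_comp_subset e₂.map_zero _).trans (hg_supp k))
  refine ⟨_, _, _, inferInstance, lp.separableSpace_of_ne_top (by norm_num), φ, hφ_cont,
    fun x => ⟨⟨fun v w => ?_, fun c v => ?_⟩, fun v w hvw => ?_⟩⟩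
  · exact lp.ext (funext fun k => by simp [hφ, (hg_fib k x).1.map_add])
  · exact lp.ext (funext fun k => by simp [hφ, (hg_fib k x).1.map_smul])
  · obtain ⟨k, hk⟩ := μ.exists_pos (mem_univ x)
    exact (hg_fib k x).2 hk.ne' (e₂.injective (by simpa [hφ] using congrArg (· k) hvw))
end
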